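/- Let G be a graph with no 2-factor and (A,B) a biased barrier of G. If H is a component of G − (A ∪ B) with e(H,B) even, then e(H,B) = 0. -/

import Mathlib

open SimpleGraph

variable {V : Type*}

/-- The number of (ordered) pairs giving edges between `X` and `Y`;
for disjoint `X`, `Y` this is the number of edges between `X` and `Y`. -/
noncomputable def eB (G : SimpleGraph V) (X Y : Set V) : ℕ :=
  Set.ncard {p : V × V | p.1 ∈ X ∧ p.2 ∈ Y ∧ G.Adj p.1 p.2}

/-- The vertex set (in `V`) of a connected component of the induced subgraph on `U`. -/
def compSupp (G : SimpleGraph V) (U : Set V)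
    (C : (G.induce U).ConnectedComponent) : Set V :=
  Subtype.val '' C.supp

/-- `δ(A,B) = 2|A| - 2|B| + ∑_{v ∈ B} d_{G-A}(v) - o(A,B)`, where `o(A,B)` is the
number of components of `G - (A ∪ B)` sending an odd number of edges to `B`. -/
noncomputable def deltaAB (G : SimpleGraph V) (A B : Set V) : ℤ :=
  2 * A.ncard - 2 * B.ncard + eB G B Aᶜ -
    Nat.card {C : (G.induce (A ∪ B)ᶜ).ConnectedComponent //
      Odd (eB G (compSupp G (A ∪ B)ᶜ C) B)}

/-- A barrier (Tutte pair) of `G`. -/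
def IsBarrier (G : SimpleGraph V) (A B : Set V) : Prop :=
  Disjoint A B ∧ deltaAB G A B ≤ -2

/-- A biased barrier: a barrier maximizing `|A|` and, subject to that, minimizing `|B|`. -/
def IsBiasedBarrier (G : SimpleGraph V) (A B : Set V) : Prop :=
  IsBarrier G A B ∧
    ∀ A' B' : Set V, IsBarrier G A' B' →
      A'.ncard ≤ A.ncard ∧ (A'.ncard = A.ncard → B.ncard ≤ B'.ncard)

/-- A `2`-factor is a `2`-regular spanning subgraph. -/
def HasTwoFactor (G : SimpleGraph V) : Prop :=
  ∃ H : SimpleGraph V, H ≤ G ∧ ∀ v : V, (H.neighborSet v).ncard = 2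

/-- The number of components of `G - S`. -/
noncomputable def numComp (G : SimpleGraph V) (S : Set V) : ℕ :=
  Nat.card ((G.induce Sᶜ).ConnectedComponent)

/-- `G` is `t`-tough: every vertex cut `S` satisfies `|S| ≥ t · c(G - S)`. -/
def Tough (t : ℝ) (G : SimpleGraph V) : Prop :=
  ∀ S : Set V, 2 ≤ numComp G S → t * (numComp G S : ℝ) ≤ (S.ncard : ℝ)

/-- The toughness `τ(G) = min_S |S| / c(G - S)` over vertex cuts `S`. -/
noncomputable def toughness (G : SimpleGraph V) : ℝ :=
  sInf {r : ℝ | ∃ S : Set V, 2 ≤ numComp G S ∧ r = (S.ncard : ℝ) / (numComp G S : ℝ)}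

/-- `G` is `k`-connected. -/
def KConnected (k : ℕ) (G : SimpleGraph V) : Prop :=
  k < Nat.card V ∧ ∀ S : Set V, S.ncard < k → (G.induce Sᶜ).Connected

/-- The independence number `α(G)`. -/
noncomputable def indepNum (G : SimpleGraph V) : ℕ :=
  sSup {n : ℕ | ∃ s : Set V, (∀ u ∈ s, ∀ v ∈ s, ¬ G.Adj u v) ∧ s.ncard = n}

/-- The minimum degree `δ(G)`. -/
noncomputable def minDeg (G : SimpleGraph V) : ℕ :=
  sInf {d : ℕ | ∃ v : V, (G.neighborSet v).ncard = d}

/-- `H` occurs as an induced subgraph of `G`. -/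
def IsInducedCopy {W : Type*} (H : SimpleGraph W) (G : SimpleGraph V) : Prop :=
  ∃ f : W ↪ V, ∀ a b : W, G.Adj (f a) (f b) ↔ H.Adj a b

/-- The disjoint union `P_m ∪ k·P_1` of a path on `m` vertices and `k` isolated vertices. -/
def pathUnion (m k : ℕ) : SimpleGraph (Fin m ⊕ Fin k) where
  Adj a b := ∃ i j : Fin m, a = Sum.inl i ∧ b = Sum.inl j ∧ (pathGraph m).Adj i j
  symm := ⟨by rintro a b ⟨i, j, rfl, rfl, h⟩; exact ⟨j, i, rfl, rfl, h.symm⟩⟩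
  loopless := ⟨by
    rintro a ⟨i, j, rfl, hj, h⟩
    obtain rfl := Sum.inl.inj hj
    exact (pathGraph m).loopless.irrefl i h⟩

/-- The join `G ∨ H` of two graphs. -/
def joinG {α β : Type*} (G : SimpleGraph α) (H : SimpleGraph β) :
    SimpleGraph (α ⊕ β) where
  Adj x y :=
    match x, y with
    | Sum.inl a, Sum.inl b => G.Adj a b
    | Sum.inr a, Sum.inr b => H.Adj a b
    | _, _ => True
  symm := ⟨by rintro (a | a) (b | b) h <;> simp_all <;> exact h.symm⟩
  loopless := ⟨by rintro (a | a) h <;> simp_all⟩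

/-- `a` disjoint copies of the complete graph `K_b`. -/
def cliquesG (a b : ℕ) : SimpleGraph (Fin a × Fin b) where
  Adj p q := p.1 = q.1 ∧ p.2 ≠ q.2
  symm := ⟨by rintro p q ⟨h1, h2⟩; exact ⟨h1.symm, h2.symm⟩⟩
  loopless := ⟨by rintro p ⟨_, h⟩; exact h rfl⟩

/-- The graph `H_n`: `K_n ∨ (K̄_{2n+1} ∪ K_{2n+1})` together with a perfect matching
between the independent part and the clique part. -/
def Hgraph (n : ℕ) :
    SimpleGraph (Fin n ⊕ (Fin (2 * n + 1) ⊕ Fin (2 * n + 1))) where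
  Adj x y := x ≠ y ∧
    match x, y with
    | Sum.inl _, _ => True
    | _, Sum.inl _ => True
    | Sum.inr (Sum.inl _), Sum.inr (Sum.inl _) => False
    | Sum.inr (Sum.inr _), Sum.inr (Sum.inr _) => True
    | Sum.inr (Sum.inl i), Sum.inr (Sum.inr j) => i = j
    | Sum.inr (Sum.inr i), Sum.inr (Sum.inl j) => i = j
  symm := ⟨by
    rintro (a | a | a) (b | b | b) ⟨hne, h⟩ <;>
      exact ⟨Ne.symm hne, by simp_all⟩⟩
  loopless := ⟨by rintro x ⟨hne, _⟩; exact hne rfl⟩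

/-! Suppose a component `H` of `G - (A ∪ B)` sends an even, nonzero number of edges to `B`, and
move a vertex `u ∈ H` with `q ≥ 1` neighbours in `B` into `A`. Then `|A|` grows by one, the degree
sum of `B` drops by `q`, and no odd component is lost: every component of `G - (A ∪ B)` splits into
components of `G - (A ∪ B ∪ {u})` whose edge counts to `B` add up, so an odd one contains an odd
piece, and when `q` is odd, `H - u` itself sends an odd number of edges to `B`. Hence
`δ(A + u, B) ≤ δ(A, B) + 2 - q - (q mod 2) ≤ δ(A, B)`, so `(A + u, B)` is a barrier with a larger
`A`, contradicting the choice of `(A, B)`. -/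

section EdgeCount

variable (G : SimpleGraph V)

lemma eB_comm (X Y : Set V) : eB G X Y = eB G Y X := by
  unfold eB
  rw [← Set.ncard_image_of_injective _ Prod.swap_injective, Set.image_swap_eq_preimage_swap]
  congr 1
  ext ⟨a, b⟩
  simp only [Set.mem_preimage, Set.mem_ofPred_eq, Prod.swap_prod_mk, G.adj_comm]
  tauto

variable [Finite V]

lemma eB_pos_iff {X Y : Set V} : 0 < eB G X Y ↔ ∃ a ∈ X, ∃ b ∈ Y, G.Adj a b := by
  rw [eB, Set.ncard_pos (Set.toFinite _)]
  exact ⟨fun ⟨p, hp⟩ => ⟨p.1, hp.1, p.2, hp.2⟩, fun ⟨a, ha, b, hb, hab⟩ => ⟨(a, b), ha, hb, hab⟩⟩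

lemma eB_union_left {X₁ X₂ : Set V} (h : Disjoint X₁ X₂) (Y : Set V) :
    eB G (X₁ ∪ X₂) Y = eB G X₁ Y + eB G X₂ Y := by
  unfold eB
  rw [← Set.ncard_union_eq]
  · congr 1
    ext p
    simp only [Set.mem_union, Set.mem_ofPred_eq, or_and_right]
  · exact Set.disjoint_left.2 fun p h₁ h₂ => Set.disjoint_left.1 h h₁.1 h₂.1

lemma eB_insert {u : V} {X : Set V} (hu : u ∉ X) (Y : Set V) :
    eB G (insert u X) Y = eB G {u} Y + eB G X Y := by
  rw [Set.insert_eq, eB_union_left G (Set.disjoint_singleton_left.2 hu)]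

lemma eB_iUnion {ι : Type*} [Fintype ι] (X : ι → Set V) (Y : Set V)
    (h : Pairwise (Function.onFun Disjoint X)) :
    eB G (⋃ i, X i) Y = ∑ i, eB G (X i) Y := by
  classical
  suffices ∀ s : Finset ι, eB G (⋃ i ∈ s, X i) Y = ∑ i ∈ s, eB G (X i) Y by
    simpa using this Finset.univ
  intro s
  induction s using Finset.induction_on with
  | empty => simp [eB]
  | insert a s ha ih =>
    rw [Finset.set_biUnion_insert, eB_union_left, Finset.sum_insert ha, ih]
    exact Set.disjoint_iUnion₂_right.2 fun i hi => h (ne_of_mem_of_not_mem hi ha).symm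

end EdgeCount

section Components

variable {G : SimpleGraph V} {U U' : Set V}

lemma compSupp_subset (C : (G.induce U).ConnectedComponent) : compSupp G U C ⊆ U := by
  rintro _ ⟨x, -, rfl⟩
  exact x.2

lemma mem_compSupp_iff {C : (G.induce U).ConnectedComponent} {v : V} (hv : v ∈ U) :
    v ∈ compSupp G U C ↔ (G.induce U).connectedComponentMk ⟨v, hv⟩ = C :=
  ⟨fun ⟨x, hx, hxv⟩ => by rwa [show x = ⟨v, hv⟩ from Subtype.ext hxv] at hx,
    fun h => ⟨⟨v, hv⟩, h, rfl⟩⟩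

lemma pairwise_disjoint_compSupp :
    Pairwise (Function.onFun Disjoint (compSupp G U)) := fun _ _ h =>
  Set.disjoint_image_of_injective Subtype.val_injective
    (pairwise_disjoint_supp_connectedComponent _ h)

lemma compSupp_inter_eq_iUnion (h : U' ⊆ U) (C : (G.induce U).ConnectedComponent) :
    compSupp G U C ∩ U' = ⋃ D : {D : (G.induce U').ConnectedComponent //
      D.map (G.induceHomOfLE h).toHom = C}, compSupp G U' D := by
  ext x
  simp only [Set.mem_inter_iff, Set.mem_iUnion, Subtype.exists]
  constructor
  · rintro ⟨hxC, hx⟩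
    refine ⟨(G.induce U').connectedComponentMk ⟨x, hx⟩, ?_, (mem_compSupp_iff hx).2 rfl⟩
    rw [ConnectedComponent.map_mk]
    exact (mem_compSupp_iff (h hx)).1 hxC
  · rintro ⟨D, rfl, hxD⟩
    have hx := compSupp_subset D hxD
    refine ⟨(mem_compSupp_iff (h hx)).2 ?_, hx⟩
    rw [← (mem_compSupp_iff hx).1 hxD, ConnectedComponent.map_mk]
    rfl

variable [Finite V]

lemma exists_odd_of_odd_inter (h : U' ⊆ U) (C : (G.induce U).ConnectedComponent) (Y : Set V)
    (hodd : Odd (eB G (compSupp G U C ∩ U') Y)) :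
    ∃ D : (G.induce U').ConnectedComponent,
      D.map (G.induceHomOfLE h).toHom = C ∧ Odd (eB G (compSupp G U' D) Y) := by
  classical
  have := Fintype.ofFinite (G.induce U').ConnectedComponent
  rw [compSupp_inter_eq_iUnion h, eB_iUnion G (fun D => compSupp G U' D.1) Y
    fun D₁ D₂ hD => pairwise_disjoint_compSupp (Subtype.coe_ne_coe.2 hD)] at hodd
  by_contra! hall
  simp only [Nat.not_odd_iff_even] at hall
  exact Nat.not_odd_iff_even.2 (Finset.even_sum _ fun D _ => hall D.1 D.2) hodd

lemma card_odd_inter_le (h : U' ⊆ U) (Y : Set V) :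
    Nat.card {C : (G.induce U).ConnectedComponent // Odd (eB G (compSupp G U C ∩ U') Y)} ≤
      Nat.card {D : (G.induce U').ConnectedComponent // Odd (eB G (compSupp G U' D) Y)} := by
  choose f hf using fun C : {C : (G.induce U).ConnectedComponent //
    Odd (eB G (compSupp G U C ∩ U') Y)} => exists_odd_of_odd_inter h C.1 Y C.2
  refine Nat.card_le_card_of_injective (fun C => ⟨f C, (hf C).2⟩) fun C₁ C₂ hC => ?_
  rw [Subtype.ext_iff, ← (hf C₁).1, ← (hf C₂).1]
  exact congrArg _ (congrArg Subtype.val hC)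

lemma card_odd_add_le_card_odd_diff {u : V} (hu : u ∈ U) (Y : Set V)
    (heven : Even (eB G (compSupp G U ((G.induce U).connectedComponentMk ⟨u, hu⟩)) Y)) :
    Nat.card {C : (G.induce U).ConnectedComponent // Odd (eB G (compSupp G U C) Y)} +
        eB G {u} Y % 2 ≤
      Nat.card {D : (G.induce (U \ {u})).ConnectedComponent //
        Odd (eB G (compSupp G (U \ {u}) D) Y)} := by
  refine le_trans ?_ (card_odd_inter_le Set.sdiff_subset Y)
  set H := (G.induce U).connectedComponentMk ⟨u, hu⟩
  have hinter (C : (G.induce U).ConnectedComponent) :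
      compSupp G U C ∩ (U \ {u}) = compSupp G U C \ {u} := by
    rw [← Set.inter_sdiff_assoc, Set.inter_eq_left.2 (compSupp_subset C)]
  have hsub : {C | Odd (eB G (compSupp G U C) Y)} ⊆
      {C | Odd (eB G (compSupp G U C ∩ (U \ {u})) Y)} := by
    intro C hC
    have hCH : C ≠ H := by
      rintro rfl
      exact Nat.not_even_iff_odd.2 hC heven
    have huC : u ∉ compSupp G U C := fun h => hCH ((mem_compSupp_iff hu).1 h).symm
    rwa [Set.mem_ofPred_eq, hinter, Set.sdiff_singleton_eq_self huC]
  have hH : eB G {u} Y + eB G (compSupp G U H ∩ (U \ {u})) Y = eB G (compSupp G U H) Y := by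
    rw [hinter, ← eB_insert G (by simp), Set.insert_sdiff_singleton,
      Set.insert_eq_of_mem ((mem_compSupp_iff hu).2 rfl)]
  rcases Nat.even_or_odd (eB G {u} Y) with hq | hq
  · rw [Nat.even_iff.1 hq, add_zero]
    exact Set.ncard_le_ncard hsub
  · have hHodd : Odd (eB G (compSupp G U H ∩ (U \ {u})) Y) := by
      rw [← hH, Nat.even_add] at heven
      rw [← Nat.not_even_iff_odd] at hq ⊢
      tauto
    rw [Nat.odd_iff.1 hq]
    have hHnot : H ∉ {C | Odd (eB G (compSupp G U C) Y)} := Nat.not_odd_iff_even.2 heven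
    exact (Set.ncard_insert_of_notMem hHnot (Set.toFinite _)).symm.trans_le
      (Set.ncard_le_ncard (Set.insert_subset hHodd hsub))

end Components

lemma deltaAB_insert_le [Finite V] {G : SimpleGraph V} {A B : Set V} {u : V}
    (hu : u ∈ (A ∪ B)ᶜ)
    (heven : Even (eB G
      (compSupp G (A ∪ B)ᶜ ((G.induce (A ∪ B)ᶜ).connectedComponentMk ⟨u, hu⟩)) B))
    (hadj : 0 < eB G {u} B) :
    deltaAB G (insert u A) B ≤ deltaAB G A B := by
  have huA : u ∉ A := fun h => hu (Or.inl h)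
  have hU : (insert u A ∪ B)ᶜ = (A ∪ B)ᶜ \ {u} := by
    ext x
    simp only [Set.mem_compl_iff, Set.mem_union, Set.mem_insert_iff, Set.mem_sdiff,
      Set.mem_singleton_iff]
    tauto
  have hAc : insert u (insert u A)ᶜ = Aᶜ := by
    ext x
    by_cases hx : x = u <;> simp [hx, huA]
  have hdeg : eB G B Aᶜ = eB G {u} B + eB G B (insert u A)ᶜ := by
    rw [eB_comm G B, eB_comm G B, ← eB_insert G (by simp), hAc]
  have hodd := card_odd_add_le_card_odd_diff hu B heven
  unfold deltaAB
  rw [hU, Set.ncard_insert_of_notMem huA, hdeg]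
  push_cast
  omega

theorem stmt5_general {V : Type*} [Fintype V] (G : SimpleGraph V) (A B : Set V)
    (hAB : IsBiasedBarrier G A B)
    (C : (G.induce (A ∪ B)ᶜ).ConnectedComponent)
    (heven : Even (eB G (compSupp G (A ∪ B)ᶜ C) B)) :
    eB G (compSupp G (A ∪ B)ᶜ C) B = 0 := by
  by_contra hne
  obtain ⟨u, huC, b, hb, hub⟩ := (eB_pos_iff G).1 (Nat.pos_of_ne_zero hne)
  have hu := compSupp_subset C huC
  obtain rfl := (mem_compSupp_iff hu).1 huC
  have huA : u ∉ A := fun h => hu (Or.inl h)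
  have hbarrier : IsBarrier G (insert u A) B :=
    ⟨Set.disjoint_insert_left.2 ⟨fun h => hu (Or.inr h), hAB.1.1⟩,
      (deltaAB_insert_le hu heven ((eB_pos_iff G).2 ⟨u, rfl, b, hb, hub⟩)).trans hAB.1.2⟩
  have hmax := (hAB.2 _ _ hbarrier).1
  rw [Set.ncard_insert_of_notMem huA] at hmax
  omega

theorem stmt5 {V : Type*} [Fintype V] (G : SimpleGraph V) (A B : Set V)
    (hG : ¬ HasTwoFactor G) (hAB : IsBiasedBarrier G A B)
    (C : (G.induce (A ∪ B)ᶜ).ConnectedComponent)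
    (heven : Even (eB G (compSupp G (A ∪ B)ᶜ C) B)) :
    eB G (compSupp G (A ∪ B)ᶜ C) B = 0 :=
  stmt5_general G A B hAB C heven
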